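/- Let L : H → G be bounded linear with 0 < ‖L‖ ≤ 1, let B be strictly positive on G, and let 0 < ρ ≤ γ. Then L ⊡_γ B ≼ L ⊡_ρ B, i.e., the resolvent cocomposition γ ↦ L* ∘ (B⁻¹ + γ(Id_G − L L*))⁻¹ ∘ L is monotonically decreasing in γ with respect to the Löwner order. -/

import Mathlib

open ContinuousLinearMap MeasureTheory

noncomputable section

variable {E : Type*} [NormedAddCommGroup E] [InnerProductSpace ℝ E] [CompleteSpace E]
variable {H G : Type*} [NormedAddCommGroup H] [InnerProductSpace ℝ H] [CompleteSpace H]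
  [NormedAddCommGroup G] [InnerProductSpace ℝ G] [CompleteSpace G]

/-- Löwner partial order: `A ≼ B` iff `B - A` is a positive operator. -/
def Loewner (A B : E →L[ℝ] E) : Prop := (B - A).IsPositive

/-- Strictly positive operators: `α • Id ≼ A` for some `α > 0`. -/
def StrictlyPos (A : E →L[ℝ] E) : Prop :=
  IsSelfAdjoint A ∧ ∃ α : ℝ, 0 < α ∧ Loewner (α • (1 : E →L[ℝ] E)) A

/-- Bounded below linear operator. -/
def BoundedBelow (L : H →L[ℝ] G) : Prop := ∃ β : ℝ, 0 < β ∧ ∀ x : H, β * ‖x‖ ≤ ‖L x‖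

/-- Resolvent cocomposition `L ⊡_γ B = L* ∘ (B⁻¹ + γ(Id − L L*))⁻¹ ∘ L`. -/
def rcc (L : H →L[ℝ] G) (γ : ℝ) (B : G →L[ℝ] G) : H →L[ℝ] H :=
  (adjoint L) ∘L (Ring.inverse (Ring.inverse B + γ • ((1 : G →L[ℝ] G) - L ∘L adjoint L))) ∘L L

/-- Resolvent composition `L ⊙_γ B = (L ⊡_{1/γ} B⁻¹)⁻¹`. -/
def rc (L : H →L[ℝ] G) (γ : ℝ) (B : G →L[ℝ] G) : H →L[ℝ] H :=
  Ring.inverse (rcc L (1/γ) (Ring.inverse B))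

/-- Parallel composition `L* ▸ B = (L* ∘ B⁻¹ ∘ L)⁻¹`. -/
def parallelComp (L : H →L[ℝ] G) (B : G →L[ℝ] G) : H →L[ℝ] H :=
  Ring.inverse ((adjoint L) ∘L (Ring.inverse B) ∘L L)

/-- `g(A,B) = inf {λ > 0 : A ≼ λ B}`. -/
def gThomp (A B : E →L[ℝ] E) : ℝ := sInf {l : ℝ | 0 < l ∧ Loewner A (l • B)}

/-- Thompson metric. -/
def dThomp (A B : E →L[ℝ] E) : ℝ := Real.log (max (gThomp A B) (gThomp B A))

/-- The (unique) positive square root of a positive operator. -/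
def opSqrt (A : E →L[ℝ] E) : E →L[ℝ] E :=
  letI := Classical.propDecidable
  if h : ∃ S : E →L[ℝ] E, S.IsPositive ∧ S * S = A then h.choose else 0

/-- Real power `A^t` of a strictly positive operator, `t ∈ (0,1)`, via the
Balakrishnan integral formula `A^t = (sin (π t)/π) ∫₀^∞ s^{t-1} A (A + s)⁻¹ ds`. -/
def opRpow (A : E →L[ℝ] E) (t : ℝ) : E →L[ℝ] E :=
  (Real.sin (Real.pi * t) / Real.pi) •
    ∫ s in Set.Ioi (0 : ℝ), s ^ (t - 1) • (A * Ring.inverse (A + s • (1 : E →L[ℝ] E)))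

/-- Geometric mean `A # B = A^{1/2} (A^{-1/2} B A^{-1/2})^{1/2} A^{1/2}`. -/
def geomMean (A B : E →L[ℝ] E) : E →L[ℝ] E :=
  opSqrt A * opSqrt (Ring.inverse (opSqrt A) * B * Ring.inverse (opSqrt A)) * opSqrt A

/-- `t`-weighted geometric mean `A #_t B = A^{1/2} (A^{-1/2} B A^{-1/2})^t A^{1/2}`. -/
def wGeomMean (t : ℝ) (A B : E →L[ℝ] E) : E →L[ℝ] E :=
  opSqrt A * opRpow (Ring.inverse (opSqrt A) * B * Ring.inverse (opSqrt A)) t * opSqrt A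

/-! `Ψ = 1 - L L†` is positive because `‖L‖ ≤ 1`, so `B⁻¹ + ρ Ψ ≤ B⁻¹ + γ Ψ`, and both sides are
strictly positive since `B⁻¹` is. Inversion reverses the Löwner order between invertible positive
operators: with `D = A⁻¹ - C⁻¹` one has `A⁻¹ - C⁻¹ = D A D + C⁻¹ (C - A) C⁻¹`, a sum of
positive operators. Finally, conjugation `X ↦ L† X L` preserves the order. -/

open scoped InnerProduct

namespace ContinuousLinearMap

variable {𝕜 F K : Type*} [RCLike 𝕜] [NormedAddCommGroup F] [InnerProductSpace 𝕜 F]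
  [NormedAddCommGroup K] [InnerProductSpace 𝕜 K]

instance : IsOrderedAddMonoid (F →L[𝕜] F) where
  add_le_add_left A B h C := by simpa only [le_def, add_sub_add_right_eq_sub] using h

variable [CompleteSpace F] [CompleteSpace K]

theorem adjoint_conj_le_adjoint_conj {T S : F →L[𝕜] F} (h : T ≤ S) (L : K →L[𝕜] F) :
    L† ∘L T ∘L L ≤ L† ∘L S ∘L L := by
  rw [le_def, ← comp_sub, ← sub_comp]
  exact h.adjoint_conj L

theorem comp_adjoint_le_one {L : K →L[𝕜] F} (hL : ‖L‖ ≤ 1) : L ∘L L† ≤ 1 := by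
  refine isPositive_def'.2
    ⟨(IsSelfAdjoint.one _).sub (isPositive_self_comp_adjoint L).isSelfAdjoint, fun x => ?_⟩
  have hx : ‖adjoint L x‖ ≤ ‖x‖ := calc
    ‖adjoint L x‖ ≤ ‖adjoint L‖ * ‖x‖ := le_opNorm _ _
    _ ≤ ‖x‖ := by rw [adjoint.norm_map]; exact mul_le_of_le_one_left (norm_nonneg _) hL
  rw [reApplyInnerSelf, sub_apply, one_apply_eq_self, comp_apply, inner_sub_left, map_sub,
    ← adjoint_inner_right, inner_self_eq_norm_sq, inner_self_eq_norm_sq, sub_nonneg]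
  gcongr

theorem ringInverse_le_ringInverse_of_le {A C : F →L[𝕜] F} (hA : 0 ≤ A) (hAC : A ≤ C)
    (hAu : IsUnit A) (hCu : IsUnit C) : Ring.inverse C ≤ Ring.inverse A := by
  rw [nonneg_iff_isPositive] at hA
  rw [le_def] at hAC ⊢
  have hCsa : IsSelfAdjoint C := by simpa using hA.isSelfAdjoint.add hAC.isSelfAdjoint
  set D := Ring.inverse A - Ring.inverse C
  have hD : IsSelfAdjoint D := hA.isSelfAdjoint.ringInverse.sub hCsa.ringInverse
  have key : D = D† ∘L A ∘L D + (Ring.inverse C)† ∘L (C - A) ∘L Ring.inverse C := by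
    rw [isSelfAdjoint_iff'.1 hD, isSelfAdjoint_iff'.1 hCsa.ringInverse, ← mul_def, ← mul_def,
      ← mul_def, ← mul_def]
    simp only [D, mul_sub, sub_mul, Ring.inverse_mul_cancel_left _ _ hAu,
      Ring.inverse_mul_cancel_left _ _ hCu, Ring.mul_inverse_cancel _ hAu, mul_one]
    abel
  rw [key]
  exact (hA.adjoint_conj D).add (hAC.adjoint_conj _)

end ContinuousLinearMap

theorem Ring.inverse_smul_one {R A : Type*} [Field R] [Ring A] [Algebra R A] {c : R} (hc : c ≠ 0) :
    Ring.inverse (c • 1 : A) = c⁻¹ • 1 := by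
  have h : ∀ a b : R, a * b = 1 → (a • 1 : A) * (b • 1) = 1 := fun a b hab => by
    rw [smul_mul_smul_comm, hab, one_mul, one_smul]
  exact Ring.inverse_unit ⟨c • 1, c⁻¹ • 1, h _ _ (mul_inv_cancel₀ hc), h _ _ (inv_mul_cancel₀ hc)⟩

theorem ContinuousLinearMap.le_norm_smul_one {T : E →L[ℝ] E} (hT : IsSelfAdjoint T) :
    T ≤ ‖T‖ • 1 := by
  rw [le_def, isPositive_iff']
  refine ⟨((IsSelfAdjoint.all _).smul (.one _)).sub hT, fun x => ?_⟩
  have h := real_inner_le_norm (T x) x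
  have h' := T.le_opNorm x
  rw [sub_apply, smul_apply, one_apply_eq_self, inner_sub_left, real_inner_smul_left,
    real_inner_self_eq_norm_sq, sub_nonneg]
  nlinarith [norm_nonneg x]

namespace StrictlyPos

variable {A : E →L[ℝ] E}

theorem nonneg (hA : StrictlyPos A) : 0 ≤ A := by
  obtain ⟨-, α, hα, hαA⟩ := hA
  exact le_trans ((nonneg_iff_isPositive _).2 (isPositive_one.smul_of_nonneg hα.le)) hαA

theorem isUnit (hA : StrictlyPos A) : IsUnit A := by
  obtain ⟨-, α, hα, hαA⟩ := hA
  refine isUnit_of_forall_le_norm_inner_map A (c := ⟨α, hα.le⟩) hα fun x => ?_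
  have h := hαA.inner_nonneg_left x
  rw [sub_apply, smul_apply, one_apply_eq_self, inner_sub_left, real_inner_smul_left,
    real_inner_self_eq_norm_sq, sub_nonneg] at h
  exact (mul_comm _ _).le.trans (h.trans (Real.le_norm_self _))

theorem add_nonneg (hA : StrictlyPos A) {P : E →L[ℝ] E} (hP : 0 ≤ P) : StrictlyPos (A + P) := by
  obtain ⟨hsa, α, hα, hαA⟩ := hA
  exact ⟨hsa.add ((nonneg_iff_isPositive _).1 hP).isSelfAdjoint, α, hα,
    le_trans hαA (le_add_of_nonneg_right hP)⟩

theorem smul_one {c : ℝ} (hc : 0 < c) : StrictlyPos (c • 1 : E →L[ℝ] E) :=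
  ⟨(IsSelfAdjoint.all _).smul (.one _), c, hc, le_refl (c • 1 : E →L[ℝ] E)⟩

theorem ringInverse (hA : StrictlyPos A) : StrictlyPos (Ring.inverse A) := by
  -- `‖A‖ + 1` rather than `‖A‖`, which vanishes on the zero space
  have hc : 0 < ‖A‖ + 1 := by positivity
  have hAc : A ≤ (‖A‖ + 1) • 1 := by
    rw [add_smul, one_smul]
    exact (le_norm_smul_one hA.1).trans
      (le_add_of_nonneg_right ((nonneg_iff_isPositive _).2 isPositive_one))
  refine ⟨hA.1.ringInverse, (‖A‖ + 1)⁻¹, inv_pos.2 hc, ?_⟩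
  rw [← Ring.inverse_smul_one hc.ne']
  exact ringInverse_le_ringInverse_of_le hA.nonneg hAc hA.isUnit (smul_one hc).isUnit

end StrictlyPos

theorem rcc_antitone_in_gamma (L : H →L[ℝ] G) (hL1 : ‖L‖ ≤ 1)
    (B : G →L[ℝ] G) (hB : StrictlyPos B) (ρ γ : ℝ) (hρ : 0 < ρ) (hργ : ρ ≤ γ) :
    Loewner (rcc L γ B) (rcc L ρ B) := by
  set Ψ : G →L[ℝ] G := 1 - L ∘L L†
  have hΨ : Ψ.IsPositive := (nonneg_iff_isPositive _).1 (sub_nonneg.2 (comp_adjoint_le_one hL1))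
  have hρΨ : 0 ≤ ρ • Ψ := (nonneg_iff_isPositive _).2 (hΨ.smul_of_nonneg hρ.le)
  have hργΨ : ρ • Ψ ≤ γ • Ψ := by
    rw [le_def, ← sub_smul]
    exact hΨ.smul_of_nonneg (sub_nonneg.2 hργ)
  have hAρ := hB.ringInverse.add_nonneg hρΨ
  have hAγ := hB.ringInverse.add_nonneg (hρΨ.trans hργΨ)
  exact adjoint_conj_le_adjoint_conj (ringInverse_le_ringInverse_of_le hAρ.nonneg
    (add_le_add_right hργΨ _) hAρ.isUnit hAγ.isUnit) L

end
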